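/- arXiv:0705.3972 — 2 statements merged into one kernel-verified Lean document; each statement's English description precedes it below -/
import Mathlib

section
/- Let A be a positive self-adjoint operator on a Hilbert space H with compact inverse and smallest eigenvalue λ₁ > 0, let α, ν > 0, and let y solve y' + ν A y + α² A y' = 0 with y(0) = v₀ ∈ D(A^{1/2}). Then for all t > 0, ‖y(t)‖² + α²‖A^{1/2} y(t)‖² ≤ e^{-d₀ t}(‖v₀‖² + α²‖A^{1/2} v₀‖²), where d₀ = (ν/2)·min{α⁻², λ₁}. -/
/-!
Put `B = 1 + α² A` and `β = ν / α²`. The equation becomes `B y' = β (y - B y)` and the energy is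
`E = ⟪B y, y⟫`. Since `A` is only a linear map (no continuity), `E` cannot be differentiated by
the product rule. After the rescaling `z = e^{βt} y` the equation reads `B z' = β z`, whose right
side is continuous; testing against a fixed vector `c` and using the mean value theorem on
`u ↦ ⟪z u, B c⟫` shows `⟪B (z u - z s), z u - z s⟫ = o(u - s)`, so `⟪B z, z⟫' = 2β‖z‖²`. This
gives `E' = -2ν ⟪A y, y⟫ ≤ -d₀ E` by coercivity, and Grönwall's argument concludes.
-/

open scoped RealInnerProductSpace
open Topology Asymptotics

section QuadraticForm

variable {H : Type*} [NormedAddCommGroup H] [InnerProductSpace ℝ H] {B : H →ₗ[ℝ] H}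
  {z z' w : ℝ → H}

theorem isLittleO_inner_map_sub_sub (hB : B.IsSymmetric) (hz : ∀ t, HasDerivAt z (z' t) t)
    (hw : Continuous w) (hBz : ∀ t, B (z' t) = w t) (s : ℝ) :
    (fun u => ⟪B (z u - z s), z u - z s⟫) =o[𝓝 s] fun u => u - s := by
  obtain ⟨M, hM⟩ := (isCompact_closedBall s 1).exists_bound_of_continuousOn hw.continuousOn
  have lipschitz_weak : ∀ c, ∀ u ∈ Metric.closedBall s 1,
      ‖⟪B (z u - z s), c⟫‖ ≤ M * ‖c‖ * ‖u - s‖ := by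
    intro c u hu
    have hderiv : ∀ τ ∈ Metric.closedBall s 1,
        HasDerivWithinAt (fun τ => ⟪z τ, B c⟫) ⟪w τ, c⟫ (Metric.closedBall s 1) τ := by
      intro τ _
      rw [← hBz, hB]
      exact ((hz τ).inner ℝ (hasDerivAt_const τ (B c))).hasDerivWithinAt.congr_deriv (by simp)
    have hbound : ∀ τ ∈ Metric.closedBall s 1, ‖⟪w τ, c⟫‖ ≤ M * ‖c‖ := fun τ hτ =>
      (norm_inner_le_norm _ _).trans (mul_le_mul_of_nonneg_right (hM τ hτ) (norm_nonneg c))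
    rw [hB, inner_sub_left]
    exact (convex_closedBall s 1).norm_image_sub_le_of_norm_hasDerivWithin_le hderiv hbound
      (Metric.mem_closedBall_self zero_le_one) hu
  have hbigO : (fun u => ⟪B (z u - z s), z u - z s⟫) =O[𝓝 s] fun u => ‖z u - z s‖ * (u - s) :=
    IsBigO.of_bound M <| by
      filter_upwards [Metric.closedBall_mem_nhds s one_pos] with u hu
      simpa [norm_mul, mul_assoc] using lipschitz_weak _ u hu
  have hsmall : (fun u => ‖z u - z s‖) =o[𝓝 s] fun _ => (1 : ℝ) :=
    (isLittleO_one_iff ℝ).mpr (tendsto_iff_norm_sub_tendsto_zero.mp (hz s).continuousAt.tendsto)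
  simpa using hbigO.trans_isLittleO (hsmall.mul_isBigO (isBigO_refl (fun u => u - s) _))

theorem hasDerivAt_inner_map_self (hB : B.IsSymmetric) (hz : ∀ t, HasDerivAt z (z' t) t)
    (hw : Continuous w) (hBz : ∀ t, B (z' t) = w t) (s : ℝ) :
    HasDerivAt (fun t => ⟪B (z t), z t⟫) (2 * ⟪w s, z s⟫) s := by
  have hsplit : (fun t => ⟪B (z t), z t⟫) = fun t =>
      (⟪B (z s), z s⟫ + 2 * ⟪B (z s), z t - z s⟫) + ⟪B (z t - z s), z t - z s⟫ := by
    funext t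
    simp only [map_sub, inner_sub_left, inner_sub_right, hB (z s) (z t), real_inner_comm (z s)]
    ring
  have hlin : HasDerivAt (fun t => ⟪B (z s), z s⟫ + 2 * ⟪B (z s), z t - z s⟫)
      (2 * ⟪w s, z s⟫) s := by
    have hpair := (hasDerivAt_const s (B (z s))).inner ℝ ((hz s).sub_const (z s))
    refine ((hpair.const_mul 2).const_add ⟪B (z s), z s⟫).congr_deriv ?_
    rw [inner_zero_left, add_zero, hB, hBz, real_inner_comm]
  have hrem : HasDerivAt (fun t => ⟪B (z t - z s), z t - z s⟫) 0 s := by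
    rw [hasDerivAt_iff_isLittleO]
    simpa using isLittleO_inner_map_sub_sub hB hz hw hBz s
  rw [hsplit]
  simpa only [add_zero] using hlin.fun_add hrem

theorem hasDerivAt_inner_map_self_of_map_deriv_eq (hB : B.IsSymmetric) {y y' : ℝ → H} {β : ℝ}
    (hy : ∀ t, HasDerivAt y (y' t) t) (hBy : ∀ t, B (y' t) = β • (y t - B (y t))) (s : ℝ) :
    HasDerivAt (fun t => ⟪B (y t), y t⟫) (2 * β * (‖y s‖ ^ 2 - ⟪B (y s), y s⟫)) s := by
  have hexp : ∀ c t : ℝ, HasDerivAt (fun t => Real.exp (c * t)) (c * Real.exp (c * t)) t :=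
    fun c t => by simpa [mul_comm] using ((hasDerivAt_id t).const_mul c).exp
  set z : ℝ → H := fun t => Real.exp (β * t) • y t with hz_def
  have hz : ∀ t, HasDerivAt z (Real.exp (β * t) • (y' t + β • y t)) t := fun t =>
    ((hexp β t).smul (hy t)).congr_deriv (by module)
  have hBz : ∀ t, B (Real.exp (β * t) • (y' t + β • y t)) = β • z t := fun t => by
    simp only [hz_def, map_smul, map_add, hBy]
    module
  have hzc : Continuous fun t => β • z t :=
    continuous_const.smul (continuous_iff_continuousAt.mpr fun t => (hz t).continuousAt)
  have hQ := hasDerivAt_inner_map_self hB hz hzc hBz s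
  have hrescale : (fun t => ⟪B (y t), y t⟫) =
      fun t => Real.exp (-(2 * β) * t) * ⟪B (z t), z t⟫ := by
    funext t
    simp only [hz_def, map_smul, real_inner_smul_left, real_inner_smul_right, ← mul_assoc,
      ← Real.exp_add]
    ring_nf
    simp
  rw [hrescale]
  refine ((hexp _ s).mul hQ).congr_deriv ?_
  have hunit : Real.exp (-(2 * β) * s) * (Real.exp (β * s) * Real.exp (β * s)) = 1 := by
    rw [← Real.exp_add, ← Real.exp_add]; ring_nf; simp
  simp only [hz_def, map_smul, real_inner_smul_left, real_inner_smul_right,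
    real_inner_self_eq_norm_sq]
  linear_combination (2 * β * (‖y s‖ ^ 2 - ⟪B (y s), y s⟫)) * hunit

end QuadraticForm

theorem le_exp_mul_of_hasDerivAt_le {f f' : ℝ → ℝ} {k : ℝ} (hf : ∀ t, HasDerivAt f (f' t) t)
    (hf' : ∀ t, f' t ≤ k * f t) {t : ℝ} (ht : 0 ≤ t) : f t ≤ Real.exp (k * t) * f 0 := by
  have hexp : ∀ t, HasDerivAt (fun t => Real.exp (-k * t)) (-k * Real.exp (-k * t)) t :=
    fun t => by simpa [mul_comm] using ((hasDerivAt_id t).const_mul (-k)).exp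
  have hanti : Antitone fun t => Real.exp (-k * t) * f t :=
    antitone_of_hasDerivAt_nonpos (fun t => (hexp t).mul (hf t)) fun t => by
      rw [Pi.zero_apply]
      nlinarith [mul_le_mul_of_nonneg_left (hf' t) (Real.exp_pos (-k * t)).le]
  have hdecay : Real.exp (-k * t) * f t ≤ f 0 := by simpa using hanti ht
  calc f t = Real.exp (k * t) * (Real.exp (-k * t) * f t) := by
        rw [← mul_assoc, ← Real.exp_add]; simp
    _ ≤ Real.exp (k * t) * f 0 := by gcongr

theorem mul_min_inv_mul_add_le {ν α lam p q : ℝ} (hν : 0 ≤ ν) (hlam : 0 ≤ lam) (hp : 0 ≤ p)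
    (hq : lam * p ≤ q) : ν / 2 * min (α ^ 2)⁻¹ lam * (p + α ^ 2 * q) ≤ ν * q := by
  have hq0 : 0 ≤ q := (mul_nonneg hlam hp).trans hq
  have hmin_p : min (α ^ 2)⁻¹ lam * p ≤ q :=
    (mul_le_mul_of_nonneg_right (min_le_right _ _) hp).trans hq
  have hmin_α : min (α ^ 2)⁻¹ lam * α ^ 2 ≤ 1 :=
    (mul_le_mul_of_nonneg_right (min_le_left _ _) (sq_nonneg α)).trans
      (inv_mul_le_one_of_le₀ le_rfl (sq_nonneg α))
  nlinarith [mul_le_mul_of_nonneg_right hmin_α hq0]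

/-- Exponential contractivity of the linear semigroup of
`y' + ν A y + α² A y' = 0`: for a symmetric operator `A` with smallest
eigenvalue `lam₁ > 0` (encoded by the coercivity `⟪Ax,x⟫ ≥ lam₁‖x‖²`,
and `‖A^{1/2}x‖² = ⟪Ax,x⟫`), every solution satisfies
`‖y(t)‖² + α²‖A^{1/2}y(t)‖² ≤ e^{-d₀ t}(‖v₀‖² + α²‖A^{1/2}v₀‖²)` for `t > 0`,
where `d₀ = (ν/2)·min{α⁻², lam₁}`. -/
theorem stmt3 {H : Type*} [NormedAddCommGroup H] [InnerProductSpace ℝ H]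
    (A : H →ₗ[ℝ] H) (hsym : ∀ x y : H, ⟪A x, y⟫ = ⟪x, A y⟫)
    (lam₁ : ℝ) (hlam₁ : 0 < lam₁)
    (hcoerc : ∀ x : H, lam₁ * ‖x‖ ^ 2 ≤ ⟪A x, x⟫)
    (α ν : ℝ) (hα : 0 < α) (hν : 0 < ν)
    (y y' : ℝ → H) (hy : ∀ t : ℝ, HasDerivAt y (y' t) t)
    (heq : ∀ t : ℝ, y' t + ν • A (y t) + α ^ 2 • A (y' t) = 0)
    (v₀ : H) (h0 : y 0 = v₀) :
    ∀ t : ℝ, 0 < t →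
      ‖y t‖ ^ 2 + α ^ 2 * ⟪A (y t), y t⟫ ≤
        Real.exp (-(ν / 2 * min (α ^ 2)⁻¹ lam₁) * t) *
          (‖v₀‖ ^ 2 + α ^ 2 * ⟪A v₀, v₀⟫) := by
  intro t ht
  set B : H →ₗ[ℝ] H := LinearMap.id + α ^ 2 • A
  have hB : B.IsSymmetric := LinearMap.IsSymmetric.id.add (LinearMap.IsSymmetric.smul rfl hsym)
  have hBx : ∀ x, ⟪B x, x⟫ = ‖x‖ ^ 2 + α ^ 2 * ⟪A x, x⟫ := fun x => by
    simp [B, inner_add_left, real_inner_smul_left]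
  have hBy : ∀ t, B (y' t) = (ν / α ^ 2) • (y t - B (y t)) := fun t => by
    have hα2 : α ^ 2 ≠ 0 := by positivity
    simp only [B, LinearMap.add_apply, LinearMap.id_apply, LinearMap.smul_apply,
      sub_add_cancel_left, smul_neg, smul_smul, div_mul_cancel₀ ν hα2]
    exact eq_neg_of_add_eq_zero_left (by rw [← heq t]; abel)
  have henergy : ∀ s, HasDerivAt (fun t => ⟪B (y t), y t⟫) (-(2 * ν * ⟪A (y s), y s⟫)) s :=
    fun s => (hasDerivAt_inner_map_self_of_map_deriv_eq hB hy hBy s).congr_deriv (by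
      rw [hBx]; field_simp; ring)
  have hdissip : ∀ s, -(2 * ν * ⟪A (y s), y s⟫) ≤
      -(ν / 2 * min (α ^ 2)⁻¹ lam₁) * ⟪B (y s), y s⟫ := fun s => by
    have hA : 0 ≤ ⟪A (y s), y s⟫ := (mul_nonneg hlam₁.le (sq_nonneg _)).trans (hcoerc (y s))
    rw [hBx, neg_mul]
    linarith [mul_min_inv_mul_add_le (α := α) hν.le hlam₁.le (sq_nonneg ‖y s‖) (hcoerc (y s)),
      mul_nonneg hν.le hA]
  simpa only [hBx, h0] using le_exp_mul_of_hasDerivAt_le henergy hdissip ht.le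
end

section
/- Let L(t) be the linearization of the Navier–Stokes–Voight flow in the variable v̂ = Gv with G² = I + α²A, i.e. L(t)w = −(ν/α²)w + (ν/α²)G⁻²w − G⁻¹B(G⁻¹w, G⁻¹v̂) − G⁻¹B(G⁻¹v̂, G⁻¹w). Suppose ‖v̂(t)‖ ≤ (λ₁ + α²)^{1/2} M₁ on the attractor. Then the quadratic form satisfies (L(t)w, w) ≤ −(ν/(2α²))‖w‖² + (ν/α² + C(λ₁+α²)² M₁⁴/(ν³α⁴))‖G⁻¹w‖² for all w ∈ H. -/
open scoped RealInnerProductSpace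

lemma young4 (x y : ℝ) (hx : 0 ≤ x) (hy : 0 ≤ y) : x * y^3 ≤ (x^4 + 3*y^4)/4 := by
  nlinarith [sq_nonneg (x - y), sq_nonneg (x + y), sq_nonneg (x*y - y^2),
    sq_nonneg (x^2 - y^2), mul_nonneg hx hy, sq_nonneg (x^2 + y^2)]

lemma key (β A B s t : ℝ) (hβ : 0 ≤ β) (hA : 0 < A) (hs : 0 ≤ s) (ht : 0 ≤ t)
    (hB : 27 * β^4 ≤ 256 * A^3 * B) : β * (s * t^3) ≤ A * t^4 + B * s^4 := by
  set μ := 3/(4*A) with hμdef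
  have hμ : 0 < μ := by positivity
  set l := μ ^ ((1:ℝ)/4) with hldef
  have hl : 0 < l := Real.rpow_pos_of_pos hμ _
  have hl4 : l^4 = μ := by
    rw [hldef, ← Real.rpow_natCast (μ ^ ((1:ℝ)/4)) 4, ← Real.rpow_mul hμ.le]
    norm_num
  have h := young4 (β*l^3*s) (t/l) (by positivity) (by positivity)
  have e1 : β*l^3*s * (t/l)^3 = β*(s*t^3) := by field_simp
  have e2 : (β*l^3*s)^4 = β^4 * μ^3 * s^4 := by rw [← hl4]; ring
  have e3 : (t/l)^4 = t^4/μ := by rw [div_pow, hl4]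
  rw [e1, e2, e3] at h
  have e4 : 3*(t^4/μ) = 4*(A*t^4) := by
    rw [hμdef]; field_simp
  have hμ3 : μ^3 = 27/(64*A^3) := by
    rw [hμdef]; rw [div_pow]; ring_nf
  have hcoef : β^4 * μ^3 * s^4 ≤ 4 * (B * s^4) := by
    rw [hμ3]
    have h1 : β^4 * (27/(64*A^3)) ≤ 4*B := by
      rw [show β^4 * (27/(64*A^3)) = 27*β^4/(64*A^3) by ring,
        div_le_iff₀ (by positivity : (0:ℝ) < 64*A^3)]
      nlinarith [hB]
    calc β^4 * (27/(64*A^3)) * s^4 ≤ 4*B*s^4 :=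
          mul_le_mul_of_nonneg_right h1 (by positivity)
      _ = 4*(B*s^4) := by ring
  linarith [h, hcoef, e4]


/-- Quadratic form estimate for the linearized Navier–Stokes–Voight flow in
the variable `v̂ = Gv`, `G² = I + α²A`:  with `Ginv = G⁻¹` symmetric, `B`
bilinear and skew (`⟪B u v, v⟫ = 0`), the trilinear bound
`|b(G⁻¹w, G⁻¹v̂, G⁻¹w)| ≤ α^{-5/2}‖G⁻¹w‖^{1/2}‖w‖^{3/2}‖v̂‖`, the attractor
bound `‖v̂‖ ≤ (lam₁+α²)^{1/2}M₁`, and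
`L w = −(ν/α²)w + (ν/α²)G⁻²w − G⁻¹B(G⁻¹w, G⁻¹v̂) − G⁻¹B(G⁻¹v̂, G⁻¹w)`, there
is an absolute constant `C > 0` (from Young's inequality) such that
`(Lw, w) ≤ −(ν/(2α²))‖w‖² + (ν/α² + C(lam₁+α²)²M₁⁴/(ν³α⁴))‖G⁻¹w‖²`. -/
theorem stmt16 {H : Type*} [NormedAddCommGroup H] [InnerProductSpace ℝ H]
    (Ginv : H →ₗ[ℝ] H)
    (hGsym : ∀ x y : H, ⟪Ginv x, y⟫ = ⟪x, Ginv y⟫)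
    (B : H →ₗ[ℝ] H →ₗ[ℝ] H) (hBskew : ∀ x y : H, ⟪B x y, y⟫ = 0)
    (ν α lam₁ M₁ : ℝ) (hν : 0 < ν) (hα : 0 < α) (hlam₁ : 0 < lam₁) (hM₁ : 0 ≤ M₁)
    (vh : H) (hvh : ‖vh‖ ≤ Real.sqrt (lam₁ + α ^ 2) * M₁)
    (htri : ∀ w : H, |⟪B (Ginv w) (Ginv vh), Ginv w⟫| ≤
      α ^ (-(5 : ℝ) / 2) * ‖Ginv w‖ ^ ((1 : ℝ) / 2) * ‖w‖ ^ ((3 : ℝ) / 2) * ‖vh‖)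
    (L : H → H)
    (hL : ∀ w : H, L w = -(ν / α ^ 2) • w + (ν / α ^ 2) • Ginv (Ginv w) -
      Ginv (B (Ginv w) (Ginv vh)) - Ginv (B (Ginv vh) (Ginv w))) :
    ∃ C : ℝ, 0 < C ∧ ∀ w : H,
      ⟪L w, w⟫ ≤ -(ν / (2 * α ^ 2)) * ‖w‖ ^ 2 +
        (ν / α ^ 2 + C * (lam₁ + α ^ 2) ^ 2 * M₁ ^ 4 / (ν ^ 3 * α ^ 4)) *
          ‖Ginv w‖ ^ 2 := by
  refine ⟨1, one_pos, fun w => ?_⟩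
  -- expand the quadratic form
  have hinner : ⟪L w, w⟫ = -(ν/α^2)*‖w‖^2 + (ν/α^2)*‖Ginv w‖^2
      - ⟪B (Ginv w) (Ginv vh), Ginv w⟫ := by
    rw [hL]
    simp only [inner_sub_left, inner_add_left, real_inner_smul_left]
    rw [hGsym (Ginv w) w, hGsym (B (Ginv w) (Ginv vh)) w,
      hGsym (B (Ginv vh) (Ginv w)) w, hBskew,
      real_inner_self_eq_norm_sq, real_inner_self_eq_norm_sq]
    ring
  set a := ‖w‖ with ha
  set g := ‖Ginv w‖ with hg
  set V := ‖vh‖ with hV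
  have hV0 : 0 ≤ V := norm_nonneg _
  have ha0 : (0:ℝ) ≤ a := norm_nonneg _
  have hg0 : (0:ℝ) ≤ g := norm_nonneg _
  -- rpow facts
  set s := g ^ ((1:ℝ)/2) with hsdef
  set t := a ^ ((1:ℝ)/2) with htdef
  have hs0 : 0 ≤ s := Real.rpow_nonneg hg0 _
  have ht0 : 0 ≤ t := Real.rpow_nonneg ha0 _
  have hs4 : s^4 = g^2 := by
    rw [hsdef, ← Real.rpow_natCast (g ^ ((1:ℝ)/2)) 4, ← Real.rpow_mul hg0,
      show ((1:ℝ)/2 * (4:ℕ)) = ((2:ℕ):ℝ) by norm_num, Real.rpow_natCast]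
  have ht4 : t^4 = a^2 := by
    rw [htdef, ← Real.rpow_natCast (a ^ ((1:ℝ)/2)) 4, ← Real.rpow_mul ha0,
      show ((1:ℝ)/2 * (4:ℕ)) = ((2:ℕ):ℝ) by norm_num, Real.rpow_natCast]
  have ht3 : t^3 = a ^ ((3:ℝ)/2) := by
    rw [htdef, ← Real.rpow_natCast (a ^ ((1:ℝ)/2)) 3, ← Real.rpow_mul ha0]
    norm_num
  have hαp : (α ^ (-(5:ℝ)/2))^4 = (α^(10:ℕ))⁻¹ := by
    rw [← Real.rpow_natCast (α ^ (-(5:ℝ)/2)) 4, ← Real.rpow_mul hα.le,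
      ← Real.rpow_natCast α 10, ← Real.rpow_neg hα.le]
    norm_num
  -- Young's inequality step
  set A := ν/(2*α^2) with hAdef
  set Bc := 27*V^4/(32*ν^3*α^4) with hBcdef
  have hA : 0 < A := by positivity
  have hβ0 : 0 ≤ α ^ (-(5:ℝ)/2) * V := by positivity
  have hBc : 27 * (α ^ (-(5:ℝ)/2) * V)^4 ≤ 256 * A^3 * Bc := by
    have : (α ^ (-(5:ℝ)/2) * V)^4 = (α^(10:ℕ))⁻¹ * V^4 := by
      rw [mul_pow, hαp]
    rw [this, hAdef, hBcdef]
    apply le_of_eq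
    field_simp
    ring
  have hkey := key (α ^ (-(5:ℝ)/2) * V) A Bc s t hβ0 hA hs0 ht0 hBc
  rw [hs4, ht4] at hkey
  have hT : -⟪B (Ginv w) (Ginv vh), Ginv w⟫ ≤ A*a^2 + Bc*g^2 := by
    have h1 : -⟪B (Ginv w) (Ginv vh), Ginv w⟫ ≤ |⟪B (Ginv w) (Ginv vh), Ginv w⟫| :=
      neg_le_abs _
    have h2 : |⟪B (Ginv w) (Ginv vh), Ginv w⟫| ≤ (α ^ (-(5:ℝ)/2) * V) * (s * t^3) := by
      calc |⟪B (Ginv w) (Ginv vh), Ginv w⟫|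
          ≤ α ^ (-(5:ℝ)/2) * s * (a ^ ((3:ℝ)/2)) * V := htri w
        _ = (α ^ (-(5:ℝ)/2) * V) * (s * t^3) := by rw [ht3]; ring
    linarith [hkey, h1, h2]
  have hv4 : V^4 ≤ (lam₁ + α^2)^2 * M₁^4 := by
    have h1 : V^4 ≤ (Real.sqrt (lam₁ + α^2) * M₁)^4 := pow_le_pow_left₀ hV0 hvh 4
    have h2 : (Real.sqrt (lam₁ + α^2) * M₁)^4 = (lam₁ + α^2)^2 * M₁^4 := by
      rw [mul_pow, show (4:ℕ) = 2*2 from rfl, pow_mul,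
        Real.sq_sqrt (by positivity : (0:ℝ) ≤ lam₁ + α^2)]
    linarith [h1]
  have hBcle : Bc ≤ (lam₁ + α^2)^2 * M₁^4 / (ν^3 * α^4) := by
    rw [hBcdef, div_le_div_iff₀ (by positivity) (by positivity)]
    have h5 : V^4*(ν^3*α^4) ≤ ((lam₁ + α^2)^2 * M₁^4)*(ν^3*α^4) :=
      mul_le_mul_of_nonneg_right hv4 (by positivity)
    have h6 : (0:ℝ) ≤ ((lam₁ + α^2)^2 * M₁^4)*(ν^3*α^4) := by positivity
    nlinarith [h5, h6]
  have hgsq : (0:ℝ) ≤ g^2 := by positivity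
  have hBg : Bc * g^2 ≤ ((lam₁ + α^2)^2 * M₁^4 / (ν^3 * α^4)) * g^2 :=
    mul_le_mul_of_nonneg_right hBcle hgsq
  rw [hinner]
  calc -(ν/α^2)*a^2 + (ν/α^2)*g^2 - ⟪B (Ginv w) (Ginv vh), Ginv w⟫
      ≤ -(ν/α^2)*a^2 + (ν/α^2)*g^2 + (A*a^2 + Bc*g^2) := by linarith [hT]
    _ ≤ -(ν/α^2)*a^2 + (ν/α^2)*g^2
        + (A*a^2 + ((lam₁ + α^2)^2 * M₁^4 / (ν^3 * α^4))*g^2) := by linarith [hBg]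
    _ = -(ν/(2*α^2))*a^2
        + (ν/α^2 + 1*(lam₁ + α^2)^2 * M₁^4 / (ν^3 * α^4))*g^2 := by
      rw [hAdef]; ring
end
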